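/- arXiv:1211.4611 — 5 statements merged into one kernel-verified Lean document; each statement's English description precedes it below -/
import Mathlib

section
/- Let V > 0, μ > 0, x > 0 and let Q : ℝ → ℝ be nondecreasing and nonnegative with Q(τ) = 0 for all τ ≤ 0. Define Ū(τ) = inf_{σ ≤ τ} (Q(σ) + μ·(τ − σ)) and let g*(q) = 0 for q ≤ 1/V and g*(q) = μ·(q − 1/V) for q > 1/V. Then for every t ∈ ℝ: inf_{τ ∈ ℝ} ( x·g*((t − τ)/x) + Ū(τ) ) = inf_{τ ∈ ℝ} ( x·g*((t − τ)/x) + Q(τ) ). -/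
/-!
Exchanging the two infima, `inf_τ (f τ + Ū τ) = inf_σ (Q σ + inf_{τ ≥ σ} (f τ + μ (τ - σ)))`,
and the inner infimum equals `f σ` (attained at `τ = σ`) because the cost
`f τ = x g*((t - τ) / x)` decreases in `τ` with slope at most `μ`, i.e. `g*` is `μ`-Lipschitz
and nondecreasing.
-/

open Set

/-- The Legendre transform `g*` of `p ↦ p / V` on `[0, μ]`. -/
noncomputable def fluxDual (V μ q : ℝ) : ℝ :=
  if q ≤ 1 / V then 0 else μ * (q - 1 / V)

lemma fluxDual_nonneg {V μ : ℝ} (hμ : 0 ≤ μ) (q : ℝ) : 0 ≤ fluxDual V μ q := by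
  unfold fluxDual
  split_ifs with h
  · exact le_rfl
  · exact mul_nonneg hμ (by linarith [not_le.mp h])

lemma fluxDual_le_add {V μ p q : ℝ} (hμ : 0 ≤ μ) (hqp : q ≤ p) :
    fluxDual V μ p ≤ fluxDual V μ q + μ * (p - q) := by
  unfold fluxDual
  split_ifs with hp hq hq <;> nlinarith

lemma iInf_add_sInf_image_Iic_eq {f Q : ℝ → ℝ} {μ : ℝ}
    (hf : ∀ σ τ, σ ≤ τ → f σ ≤ f τ + μ * (τ - σ))
    (hbdd : BddBelow (range fun τ => f τ + Q τ)) :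
    ⨅ τ, (f τ + sInf ((fun σ => Q σ + μ * (τ - σ)) '' Iic τ)) = ⨅ τ, (f τ + Q τ) := by
  have hinf_le : ∀ τ, ∀ σ ≤ τ, (⨅ τ, (f τ + Q τ)) ≤ f τ + (Q σ + μ * (τ - σ)) := fun τ σ hστ =>
    (ciInf_le hbdd σ).trans (by linarith [hf σ τ hστ])
  have hinf_sub_le : ∀ τ, (⨅ τ, (f τ + Q τ)) - f τ ≤ sInf ((fun σ => Q σ + μ * (τ - σ)) '' Iic τ) :=
    fun τ => le_csInf (nonempty_Iic.image _) <| forall_mem_image.mpr fun σ hσ => by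
      linarith [hinf_le τ σ hσ]
  have hreleased_le : ∀ τ, sInf ((fun σ => Q σ + μ * (τ - σ)) '' Iic τ) ≤ Q τ := fun τ => by
    have hbelow : BddBelow ((fun σ => Q σ + μ * (τ - σ)) '' Iic τ) :=
      ⟨(⨅ τ, (f τ + Q τ)) - f τ, forall_mem_image.mpr fun σ hσ => by
        linarith [hinf_le τ σ hσ]⟩
    simpa using csInf_le hbelow ⟨τ, self_mem_Iic, rfl⟩
  apply le_antisymm
  · exact le_ciInf fun τ =>
      (ciInf_le ⟨⨅ τ, (f τ + Q τ), forall_mem_range.mpr fun τ => by linarith [hinf_sub_le τ]⟩ τ).trans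
        (by linarith [hreleased_le τ])
  · exact le_ciInf fun τ => by linarith [hinf_sub_le τ]

theorem lax_formula_inflow_eq_released_general (V μ x : ℝ) (hμ : 0 < μ) (hx : 0 < x)
    (Q : ℝ → ℝ) (hQnonneg : ∀ τ, 0 ≤ Q τ)
    (t : ℝ) :
    sInf (Set.range fun τ : ℝ =>
        x * (if (t - τ) / x ≤ 1 / V then 0 else μ * ((t - τ) / x - 1 / V)) +
          sInf ((fun σ => Q σ + μ * (τ - σ)) '' Set.Iic τ)) =
      sInf (Set.range fun τ : ℝ =>
        x * (if (t - τ) / x ≤ 1 / V then 0 else μ * ((t - τ) / x - 1 / V)) + Q τ) := by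
  have hcost : ∀ σ τ, σ ≤ τ →
      x * fluxDual V μ ((t - σ) / x) ≤ x * fluxDual V μ ((t - τ) / x) + μ * (τ - σ) := by
    intro σ τ hστ
    have hslope : μ * (τ - σ) = x * (μ * ((t - σ) / x - (t - τ) / x)) := by
      field_simp
      ring
    rw [hslope, ← mul_add]
    exact mul_le_mul_of_nonneg_left
      (fluxDual_le_add hμ.le (div_le_div_of_nonneg_right (by linarith) hx.le)) hx.le
  exact iInf_add_sInf_image_Iic_eq hcost
    ⟨0, forall_mem_range.mpr fun τ =>
      add_nonneg (mul_nonneg hx.le (fluxDual_nonneg hμ.le _)) (hQnonneg τ)⟩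

/-- Second identity of the Lax formula: the variational solution can be expressed directly
in terms of the inflow profile `Q` instead of the released-flow profile `Ū`. -/
theorem lax_formula_inflow_eq_released (V μ x : ℝ) (hV : 0 < V) (hμ : 0 < μ) (hx : 0 < x)
    (Q : ℝ → ℝ) (hQmono : Monotone Q) (hQnonneg : ∀ τ, 0 ≤ Q τ) (hQzero : ∀ τ ≤ 0, Q τ = 0)
    (t : ℝ) :
    sInf (Set.range fun τ : ℝ =>
        x * (if (t - τ) / x ≤ 1 / V then 0 else μ * ((t - τ) / x - 1 / V)) +
          sInf ((fun σ => Q σ + μ * (τ - σ)) '' Set.Iic τ)) =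
      sInf (Set.range fun τ : ℝ =>
        x * (if (t - τ) / x ≤ 1 / V then 0 else μ * ((t - τ) / x - 1 / V)) + Q τ) :=
  lax_formula_inflow_eq_released_general V μ x hμ hx Q hQnonneg t
end

section
/- Let L > 0, V > 0, μ > 0, and let Q : ℝ → ℝ be nondecreasing, left-continuous, nonnegative, with Q(τ) = 0 for all τ ≤ 0. Let g*(q) = 0 for q ≤ 1/V and g*(q) = μ·(q − 1/V) for q > 1/V. Then for every t ∈ ℝ: inf_{τ ∈ ℝ} ( L·g*((t − τ)/L) + Q(τ) ) = inf_{τ ≤ t − L/V} ( Q(τ) − μ·τ ) + (t − L/V)·μ. -/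
/-- Simplification of the Lax formula for the cumulative exit flow of a processor of
length `L`, speed `V` and capacity `μ`:
`inf_τ (L g*((t-τ)/L) + Q(τ)) = inf_{τ ≤ t - L/V} (Q(τ) - μ τ) + (t - L/V) μ`. -/
theorem lax_formula_simplified (L V μ : ℝ) (hL : 0 < L) (hV : 0 < V) (hμ : 0 < μ)
    (Q : ℝ → ℝ) (hQmono : Monotone Q)
    (hQlc : ∀ τ : ℝ, ContinuousWithinAt Q (Set.Iio τ) τ)
    (hQnonneg : ∀ τ, 0 ≤ Q τ) (hQzero : ∀ τ ≤ 0, Q τ = 0) (t : ℝ) :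
    sInf (Set.range fun τ : ℝ =>
        L * (if (t - τ) / L ≤ 1 / V then 0 else μ * ((t - τ) / L - 1 / V)) + Q τ) =
      sInf ((fun τ => Q τ - μ * τ) '' Set.Iic (t - L / V)) + (t - L / V) * μ := by
  set s := t - L / V with hs
  set f : ℝ → ℝ := fun τ : ℝ =>
    L * (if (t - τ) / L ≤ 1 / V then 0 else μ * ((t - τ) / L - 1 / V)) + Q τ with hf
  have hcond : ∀ τ : ℝ, ((t - τ) / L ≤ 1 / V ↔ s ≤ τ) := by
    intro τ
    have hLV : L / V * V = L := div_mul_cancel₀ L hV.ne'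
    rw [div_le_div_iff₀ hL hV, hs]
    constructor <;> intro h <;> nlinarith [hLV, hV]
  have hfle : ∀ τ ≤ s, f τ = Q τ - μ * τ + s * μ := by
    intro τ hτ
    rcases eq_or_lt_of_le hτ with heq | hτ'
    · simp only [hf]
      rw [heq, if_pos ((hcond s).mpr le_rfl)]
      ring
    · simp only [hf]
      rw [if_neg (fun h => absurd ((hcond τ).mp h) (not_le.mpr hτ'))]
      have hL' : L ≠ 0 := ne_of_gt hL
      rw [hs]
      field_simp
      ring
  -- bounded below facts
  have hAbdd : BddBelow (Set.range f) := by
    refine ⟨0, ?_⟩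
    rintro x ⟨τ, rfl⟩
    simp only [hf]
    have hq := hQnonneg τ
    split_ifs with h
    · linarith
    · have h1 : 1 / V < (t - τ) / L := not_le.mp h
      have h2 : 0 ≤ L * (μ * ((t - τ) / L - 1 / V)) :=
        mul_nonneg hL.le (mul_nonneg hμ.le (by linarith))
      linarith
  have hBbdd : BddBelow ((fun τ => Q τ - μ * τ) '' Set.Iic s) := by
    refine ⟨min 0 (-(μ * s)), ?_⟩
    rintro x ⟨τ, hτ, rfl⟩
    simp only [Set.mem_Iic] at hτ
    dsimp only
    rcases le_or_gt τ 0 with h0 | h0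
    · have : Q τ = 0 := hQzero τ h0
      refine le_trans (min_le_left _ _) ?_
      nlinarith
    · refine le_trans (min_le_right _ _) ?_
      have hq := hQnonneg τ
      nlinarith
  have hBne : ((fun τ => Q τ - μ * τ) '' Set.Iic s).Nonempty :=
    ⟨Q s - μ * s, ⟨s, Set.self_mem_Iic, rfl⟩⟩
  have hAne : (Set.range f).Nonempty := ⟨f t, ⟨t, rfl⟩⟩
  apply le_antisymm
  · rw [← sub_le_iff_le_add]
    apply le_csInf hBne
    rintro x ⟨τ, hτ, rfl⟩
    simp only [Set.mem_Iic] at hτ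
    have h1 : sInf (Set.range f) ≤ f τ := csInf_le hAbdd ⟨τ, rfl⟩
    rw [hfle τ hτ] at h1
    dsimp only
    linarith
  · apply le_csInf hAne
    rintro x ⟨τ, rfl⟩
    rcases le_or_gt τ s with h | h
    · rw [hfle τ h]
      have h1 : sInf ((fun τ => Q τ - μ * τ) '' Set.Iic s) ≤ Q τ - μ * τ :=
        csInf_le hBbdd ⟨τ, Set.mem_Iic.mpr h, rfl⟩
      linarith
    · have hfτ : f τ = Q τ := by
        simp only [hf]
        rw [if_pos ((hcond τ).mpr h.le)]
        ring
      have h1 : sInf ((fun τ => Q τ - μ * τ) '' Set.Iic s) ≤ Q s - μ * s :=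
        csInf_le hBbdd ⟨s, Set.self_mem_Iic, rfl⟩
      have h2 : Q s ≤ Q τ := hQmono h.le
      rw [hfτ]
      linarith
end

section
/- Let μ > 0, s ∈ ℝ, and let F : ℝ → ℝ be nondecreasing and left-continuous. Suppose there are finitely many points ξ₁ < ξ₂ < … < ξ_k ≤ s such that F is constant on (−∞, ξ₁], and F is affine on each open interval (ξ_i, ξ_{i+1}) for i = 1, …, k−1 and on (ξ_k, s) (when ξ_k < s). Then inf_{τ ≤ s} ( F(τ) − μ·τ ) = min_{τ ∈ {ξ₁, …, ξ_k, s}} ( F(τ) − μ·τ ); in particular the infimum of F(τ) − μ·τ over τ ≤ s is attained at a point of the finite set {ξ₁, …, ξ_k, s}. -/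
private lemma key_interval (μ : ℝ) (hμ : 0 < μ) (F : ℝ → ℝ) (hFmono : Monotone F)
    (p q a b τ : ℝ) (hpq : p < q) (hlc : ContinuousWithinAt F (Set.Iio q) q)
    (haff : ∀ x ∈ Set.Ioo p q, F x = a * x + b) (hτ : τ ∈ Set.Ioo p q) :
    min (F p - μ * p) (F q - μ * q) ≤ F τ - μ * τ := by
  have hIooq : Set.Ioo p q ∈ nhdsWithin q (Set.Iio q) :=
    Ioo_mem_nhdsLT_of_mem ⟨hpq, le_rfl⟩
  have hIoop : Set.Ioo p q ∈ nhdsWithin p (Set.Ioi p) :=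
    Ioo_mem_nhdsGT_of_mem ⟨le_rfl, hpq⟩
  have hFq : F q = a * q + b := by
    have h1 : Filter.Tendsto F (nhdsWithin q (Set.Iio q)) (nhds (F q)) := hlc
    have h2 : Filter.Tendsto (fun x => a * x + b) (nhdsWithin q (Set.Iio q))
        (nhds (a * q + b)) :=
      ((continuous_const.mul continuous_id).add continuous_const).continuousAt.tendsto.mono_left
        nhdsWithin_le_nhds
    have h3 : Filter.Tendsto F (nhdsWithin q (Set.Iio q)) (nhds (a * q + b)) :=
      h2.congr' (by filter_upwards [hIooq] with x hx using (haff x hx).symm)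
    exact tendsto_nhds_unique h1 h3
  have hFp : F p ≤ a * p + b := by
    have h2 : Filter.Tendsto (fun x => a * x + b) (nhdsWithin p (Set.Ioi p))
        (nhds (a * p + b)) :=
      ((continuous_const.mul continuous_id).add continuous_const).continuousAt.tendsto.mono_left
        nhdsWithin_le_nhds
    refine ge_of_tendsto h2 ?_
    filter_upwards [hIoop] with x hx
    rw [← haff x hx]
    exact hFmono hx.1.le
  have hFτ : F τ = a * τ + b := haff τ hτ
  obtain ⟨h1, h2⟩ := hτ
  rcases le_total a μ with h | h
  · refine le_trans (min_le_right _ _) ?_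
    rw [hFq, hFτ]; nlinarith
  · refine le_trans (min_le_left _ _) ?_
    rw [hFτ]; nlinarith

/-- For a nondecreasing, left-continuous, piecewise affine function `F` with break points
`ξ₁ < … < ξ_k ≤ s` (constant on `(-∞, ξ₁]`, affine between consecutive break points and on
`(ξ_k, s)`), the infimum of `F(τ) - μ τ` over `τ ≤ s` equals the minimum over the finite set
`{ξ₁, …, ξ_k, s}`; in particular it is attained at a point of this finite set. -/
theorem pwa_inf_over_breakpoints (μ s : ℝ) (hμ : 0 < μ) (F : ℝ → ℝ)
    (hFmono : Monotone F) (hFlc : ∀ τ : ℝ, ContinuousWithinAt F (Set.Iio τ) τ)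
    (k : ℕ) (hk : 0 < k) (ξ : Fin k → ℝ) (hξ : StrictMono ξ)
    (hlast : ξ ⟨k - 1, by omega⟩ ≤ s)
    (hconst : ∃ c, ∀ x ≤ ξ ⟨0, hk⟩, F x = c)
    (haffine : ∀ i : ℕ, (hi : i + 1 < k) →
      ∃ a b, ∀ x ∈ Set.Ioo (ξ ⟨i, by omega⟩) (ξ ⟨i + 1, hi⟩), F x = a * x + b)
    (hlastaffine : ξ ⟨k - 1, by omega⟩ < s →
      ∃ a b, ∀ x ∈ Set.Ioo (ξ ⟨k - 1, by omega⟩) s, F x = a * x + b) :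
    sInf ((fun τ => F τ - μ * τ) '' Set.Iic s) =
      (insert s (Finset.univ.image ξ)).inf' (by simp) (fun τ => F τ - μ * τ) ∧
    ∃ τ₀ ∈ insert s (Finset.univ.image ξ),
      sInf ((fun τ => F τ - μ * τ) '' Set.Iic s) = F τ₀ - μ * τ₀ := by
  classical
  set g : ℝ → ℝ := fun τ => F τ - μ * τ with hg
  set S : Finset ℝ := insert s (Finset.univ.image ξ) with hS
  have hSne : S.Nonempty := ⟨s, by simp [hS]⟩
  set m := S.inf' hSne g with hm
  have hξle : ∀ i : Fin k, ξ i ≤ s := by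
    intro i
    refine le_trans ?_ hlast
    exact hξ.monotone (Fin.le_def.mpr (by show i.val ≤ k - 1; have := i.isLt; omega))
  have hmem : ∀ i : Fin k, ξ i ∈ S := by intro i; simp [hS]
  have key : ∀ τ ≤ s, m ≤ g τ := by
    intro τ hτ
    by_cases h0 : τ ≤ ξ ⟨0, hk⟩
    · obtain ⟨c, hc⟩ := hconst
      have h1 : g (ξ ⟨0, hk⟩) ≤ g τ := by
        simp only [hg, hc τ h0, hc _ le_rfl]
        nlinarith
      exact le_trans (Finset.inf'_le _ (hmem _)) h1
    · push_neg at h0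
      set ξ' : ℕ → ℝ := fun i => ξ ⟨min i (k - 1), by omega⟩ with hξ'
      have hξ'eq : ∀ i, (h : i < k) → ξ' i = ξ ⟨i, h⟩ := by
        intro i h
        simp only [hξ']
        exact congrArg ξ (Fin.ext (by show min i (k - 1) = i; omega))
      set P : ℕ → Prop := fun i => ξ' i < τ with hP
      have hP0 : P 0 := by
        show ξ' 0 < τ
        rw [hξ'eq 0 hk]; exact h0
      set j := Nat.findGreatest P (k - 1) with hj
      have hjle : j ≤ k - 1 := Nat.findGreatest_le _
      have hPj : P j := Nat.findGreatest_spec (Nat.zero_le _) hP0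
      by_cases hjtop : j = k - 1
      · have hklt : ξ ⟨k - 1, by omega⟩ < τ := by
          rw [← hξ'eq (k - 1) (by omega), ← hjtop]; exact hPj
        rcases eq_or_lt_of_le hτ with he | hlt
        · rw [he]; exact Finset.inf'_le _ (by simp [hS])
        · have hks : ξ ⟨k - 1, by omega⟩ < s := lt_trans hklt hlt
          obtain ⟨a, b, hab⟩ := hlastaffine hks
          have hmin := key_interval μ hμ F hFmono _ s a b τ hks (hFlc s) hab ⟨hklt, hlt⟩
          exact le_trans (le_min (Finset.inf'_le g (hmem _)) (Finset.inf'_le g (by simp [hS]))) hmin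
      · have hjlt : j < k - 1 := lt_of_le_of_ne hjle hjtop
        have hnext : ¬ P (j + 1) :=
          Nat.findGreatest_is_greatest (n := k - 1) (by omega) (by omega)
        have hτle : τ ≤ ξ ⟨j + 1, by omega⟩ := by
          rw [← hξ'eq (j + 1) (by omega)]
          exact not_lt.1 hnext
        have hξjτ : ξ ⟨j, by omega⟩ < τ := by
          rw [← hξ'eq j (by omega)]; exact hPj
        rcases eq_or_lt_of_le hτle with he | hlt
        · rw [he]; exact Finset.inf'_le _ (hmem _)
        · obtain ⟨a, b, hab⟩ := haffine j (by omega)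
          have hlt2 : ξ ⟨j, by omega⟩ < ξ ⟨j + 1, by omega⟩ := hξ (by simp [Fin.lt_def])
          have hmin := key_interval μ hμ F hFmono _ _ a b τ hlt2 (hFlc _) hab ⟨hξjτ, hlt⟩
          exact le_trans (le_min (Finset.inf'_le g (hmem _)) (Finset.inf'_le g (hmem _))) hmin
  have himg_ne : (g '' Set.Iic s).Nonempty := ⟨g s, ⟨s, Set.mem_Iic.mpr le_rfl, rfl⟩⟩
  have hbdd : ∀ y ∈ g '' Set.Iic s, m ≤ y := by
    rintro y ⟨τ, hτ, rfl⟩; exact key τ hτ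
  obtain ⟨τ₀, hτ₀S, hτ₀⟩ := Finset.exists_mem_eq_inf' (s := S) hSne g
  have hτ₀' : m = g τ₀ := hτ₀
  have hτ₀le : τ₀ ≤ s := by
    rcases Finset.mem_insert.1 hτ₀S with rfl | h
    · exact le_rfl
    · simp only [Finset.mem_image, Finset.mem_univ, true_and] at h
      obtain ⟨i, rfl⟩ := h
      exact hξle i
  have hsinf : sInf (g '' Set.Iic s) = m := by
    refine le_antisymm ?_ (le_csInf himg_ne hbdd)
    rw [hτ₀']
    exact csInf_le ⟨m, hbdd⟩ ⟨τ₀, Set.mem_Iic.mpr hτ₀le, rfl⟩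
  exact ⟨hsinf, τ₀, hτ₀S, by rw [hsinf, hτ₀']⟩
end

section
/- Let h > 0, N ∈ ℕ, t_i = i·h for i = 0, …, N, and let L, V, μ > 0 with Δ = ⌈L/(V·h)⌉ ≤ N. Let q₀ ≥ 0 and let (Q_i)_{i=0}^N be a nondecreasing sequence of nonnegative reals. Define Q̂₀ = 0, Q̂_i = q₀ + Q_i for 1 ≤ i ≤ N, and for Δ ≤ i ≤ N define the discrete value U_i = min_{0 ≤ j ≤ i − Δ} ( Q̂_j − μ·t_j ) + (t_i − L/V)·μ. Let Q̂ : ℝ → ℝ be the function with Q̂(τ) = 0 for τ ≤ 0 and, for τ ∈ (t_j, t_{j+1}] with 0 ≤ j ≤ N − 1, Q̂(τ) = q₀ + Q_j + (Q_{j+1} − Q_j)·(τ − t_j)/h, and define the continuous-time exit flow U(t, L) = inf_{τ ≤ t − L/V} ( Q̂(τ) − μ·τ ) + (t − L/V)·μ. Then for every Δ ≤ i ≤ N: 0 ≤ U_i − U(t_i, L) ≤ ( ⌈L/(V·h)⌉ − L/(V·h) )·h·μ. -/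
set_option maxHeartbeats 1000000


/-- Error estimate for the discrete Lax formula: with `Δ = ⌈L/(Vh)⌉`, the discrete exit flow
`U_i` overestimates the continuous-time exit flow `U(t_i, L)` by at most
`(⌈L/(Vh)⌉ - L/(Vh)) h μ`. -/
theorem discrete_lax_error_estimate (h : ℝ) (hh : 0 < h) (N : ℕ) (L V μ : ℝ)
    (hL : 0 < L) (hV : 0 < V) (hμ : 0 < μ) (hΔN : ⌈L / (V * h)⌉₊ ≤ N)
    (q0 : ℝ) (hq0 : 0 ≤ q0) (Q : ℕ → ℝ)
    (hQmono : ∀ i j : ℕ, i ≤ j → j ≤ N → Q i ≤ Q j) (hQnonneg : ∀ i ≤ N, 0 ≤ Q i)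
    (Qc : ℝ → ℝ) (hQc0 : ∀ τ : ℝ, τ ≤ 0 → Qc τ = 0)
    (hQcInterp : ∀ j : ℕ, j < N → ∀ τ : ℝ, (j : ℝ) * h < τ → τ ≤ ((j : ℝ) + 1) * h →
      Qc τ = q0 + Q j + (Q (j + 1) - Q j) * (τ - (j : ℝ) * h) / h) :
    let Δ : ℕ := ⌈L / (V * h)⌉₊
    let Qhat : ℕ → ℝ := fun i => if i = 0 then 0 else q0 + Q i
    let U : ℕ → ℝ := fun i =>
      (Finset.range (i - Δ + 1)).inf' (Finset.nonempty_range_iff.mpr (by omega))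
          (fun j => Qhat j - μ * (j * h)) +
        ((i : ℝ) * h - L / V) * μ
    let Uc : ℝ → ℝ := fun t =>
      sInf ((fun τ => Qc τ - μ * τ) '' Set.Iic (t - L / V)) + (t - L / V) * μ
    ∀ i : ℕ, Δ ≤ i → i ≤ N →
      0 ≤ U i - Uc ((i : ℝ) * h) ∧
      U i - Uc ((i : ℝ) * h) ≤ ((⌈L / (V * h)⌉₊ : ℝ) - L / (V * h)) * h * μ := by
  intro Δ Qhat U Uc i hΔi hiN
  have hΔdef : Δ = ⌈L / (V * h)⌉₊ := rfl
  have hxpos : (0:ℝ) < L / (V * h) := by positivity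
  have hΔ1 : 1 ≤ Δ := Nat.ceil_pos.mpr hxpos
  have hΔx : L / (V * h) ≤ (Δ : ℝ) := Nat.le_ceil _
  have hxΔ : (Δ : ℝ) < L / (V * h) + 1 := Nat.ceil_lt_add_one hxpos.le
  have hLV : L / V = (L / (V * h)) * h := by field_simp
  set m : ℕ := i - Δ with hm
  have hmN : m + 1 ≤ N := by omega
  have hcast : (m : ℝ) = (i : ℝ) - (Δ : ℝ) := by
    rw [hm]; push_cast [Nat.cast_sub hΔi]; ring
  set T : ℝ := (i : ℝ) * h - L / V with hTdef
  have hTlow : (m : ℝ) * h ≤ T := by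
    rw [hTdef, hcast, hLV]; nlinarith
  have hThigh : T < ((m : ℝ) + 1) * h := by
    rw [hTdef, hcast, hLV]; nlinarith
  set ε : ℝ := (Δ : ℝ) * h - L / V with hε
  have hε0 : 0 ≤ ε := by rw [hε, hLV]; nlinarith
  have hεT : T - (m : ℝ) * h = ε := by rw [hTdef, hε, hcast]; ring
  have hQhat_le : ∀ j, j ≤ N → Qhat j ≤ q0 + Q j := by
    intro j hj
    by_cases hj0 : j = 0
    · subst hj0; simp only [Qhat, if_pos rfl]
      have := hQnonneg 0 (by omega); linarith
    · simp only [Qhat, if_neg hj0]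
      exact le_rfl
  have hQcgrid : ∀ j : ℕ, j ≤ m → Qc ((j : ℝ) * h) = Qhat j := by
    intro j hj
    rcases Nat.eq_zero_or_pos j with h0 | hpos
    · subst h0
      simp only [Qhat, if_pos rfl, Nat.cast_zero, zero_mul]
      exact hQc0 0 le_rfl
    · obtain ⟨k, rfl⟩ : ∃ k, j = k + 1 := ⟨j - 1, by omega⟩
      have hkN : k < N := by omega
      have h1 : (k : ℝ) * h < ((k : ℝ) + 1) * h := by nlinarith
      have hval := hQcInterp k hkN (((k : ℝ) + 1) * h) h1 le_rfl
      have hc : ((k + 1 : ℕ) : ℝ) * h = ((k : ℝ) + 1) * h := by push_cast; ring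
      rw [hc, hval]
      simp only [Qhat, if_neg (Nat.succ_ne_zero k)]
      field_simp
      ring
  have hne : (Finset.range (i - Δ + 1)).Nonempty := Finset.nonempty_range_iff.mpr (by omega)
  set M : ℝ := (Finset.range (i - Δ + 1)).inf' hne (fun j => Qhat j - μ * (j * h)) with hM
  have hM_le : ∀ j : ℕ, j ≤ m → M ≤ Qhat j - μ * ((j : ℝ) * h) := by
    intro j hj
    exact Finset.inf'_le _ (Finset.mem_range.mpr (by omega))
  -- key lower bound on all elements of the image set
  have key_lb : ∀ y ∈ (fun τ => Qc τ - μ * τ) '' Set.Iic T, M - μ * ε ≤ y := by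
    rintro y ⟨τ, hτT, rfl⟩
    show M - μ * ε ≤ Qc τ - μ * τ
    simp only [Set.mem_Iic] at hτT
    by_cases hτ0 : τ ≤ 0
    · have hQcτ : Qc τ = 0 := hQc0 τ hτ0
      have hM0 : M ≤ Qhat 0 - μ * ((0 : ℕ) * h) := hM_le 0 (by omega)
      simp only [Qhat, if_pos rfl, Nat.cast_zero, zero_mul, mul_zero, sub_zero,
        zero_sub] at hM0
      have : 0 ≤ μ * ε := mul_nonneg hμ.le hε0
      simp only [hQcτ]
      nlinarith
    · push_neg at hτ0
      set jn : ℕ := ⌈τ / h⌉₊ with hjn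
      have hjn1 : 1 ≤ jn := Nat.ceil_pos.mpr (by positivity)
      obtain ⟨j, hjeq⟩ : ∃ j, jn = j + 1 := ⟨jn - 1, by omega⟩
      have hjlt : (j : ℝ) < τ / h := by
        have : j < jn := by omega
        exact Nat.lt_ceil.mp (by omega)
      have hτle : τ / h ≤ (j : ℝ) + 1 := by
        have := Nat.le_ceil (τ / h)
        rw [← hjn, hjeq] at this
        push_cast at this; linarith
      have hτhh : (τ / h) * h = τ := div_mul_cancel₀ τ hh.ne'
      have hjh : (j : ℝ) * h < τ := by nlinarith
      have hτjh : τ ≤ ((j : ℝ) + 1) * h := by nlinarith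
      have hjm : j ≤ m := by
        by_contra hcon
        push_neg at hcon
        have : ((m : ℝ) + 1) * h ≤ (j : ℝ) * h := by
          have : (m : ℝ) + 1 ≤ (j : ℝ) := by exact_mod_cast hcon
          nlinarith
        linarith [lt_of_le_of_lt hτT hThigh]
      have hjN : j < N := by omega
      have hj1N : j + 1 ≤ N := by omega
      have hint := hQcInterp j hjN τ hjh hτjh
      have hQjmono : Q j ≤ Q (j + 1) := hQmono j (j + 1) (by omega) hj1N
      have hMj : M ≤ q0 + Q j - μ * ((j : ℝ) * h) := by
        have := hM_le j hjm
        have := hQhat_le j (by omega)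
        linarith
      rcases lt_or_ge j m with hjlt' | hjge
      · -- interior interval: convex combination of two grid values
        have hMj1 : M ≤ q0 + Q (j + 1) - μ * (((j : ℝ) + 1) * h) := by
          have h1 := hM_le (j + 1) (by omega)
          have h2 := hQhat_le (j + 1) hj1N
          have hc : ((j + 1 : ℕ) : ℝ) = (j : ℝ) + 1 := by push_cast; ring
          rw [hc] at h1
          linarith
        set s : ℝ := (τ - (j : ℝ) * h) / h with hs
        have hs0 : 0 < s := div_pos (by linarith) hh
        have hs1 : s ≤ 1 := by
          rw [hs, div_le_one hh]; linarith
        have hconv : Qc τ - μ * τ =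
            (1 - s) * (q0 + Q j - μ * ((j : ℝ) * h)) +
              s * (q0 + Q (j + 1) - μ * (((j : ℝ) + 1) * h)) := by
          rw [hint, hs]; field_simp; ring
        rw [hconv]
        have : 0 ≤ μ * ε := mul_nonneg hμ.le hε0
        nlinarith
      · -- last partial interval: j = m
        have hjm' : j = m := le_antisymm hjm hjge
        have hmid : 0 ≤ (Q (j + 1) - Q j) * (τ - (j : ℝ) * h) / h :=
          div_nonneg (mul_nonneg (by linarith) (by linarith)) hh.le
        have hτT' : τ ≤ (j : ℝ) * h + ε := by
          rw [hjm']; linarith [hεT]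
        have hμτ : μ * τ ≤ μ * ((j : ℝ) * h) + μ * ε := by nlinarith
        rw [hint]
        clear_value M ε T m
        linarith [hMj, hμτ, hmid]
  set S : Set ℝ := (fun τ => Qc τ - μ * τ) '' Set.Iic T with hS
  have hSne : S.Nonempty := ⟨Qc T - μ * T, ⟨T, Set.mem_Iic.mpr le_rfl, rfl⟩⟩
  have hSbdd : BddBelow S := ⟨M - μ * ε, key_lb⟩
  have h_le : sInf S ≤ M := by
    obtain ⟨j, hjmem, hjeq⟩ :=
      Finset.exists_mem_eq_inf' hne (fun j => Qhat j - μ * (j * h))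
    have hjm : j ≤ m := by
      have := Finset.mem_range.mp hjmem; omega
    have hjhT : (j : ℝ) * h ≤ T := by
      have : (j : ℝ) ≤ (m : ℝ) := by exact_mod_cast hjm
      nlinarith
    have hmem : Qhat j - μ * ((j : ℝ) * h) ∈ S := by
      refine ⟨(j : ℝ) * h, Set.mem_Iic.mpr hjhT, ?_⟩
      show Qc ((j : ℝ) * h) - μ * ((j : ℝ) * h) = _
      rw [hQcgrid j hjm]
    rw [hM, hjeq]
    exact csInf_le hSbdd hmem
  have h_ge : M - μ * ε ≤ sInf S := le_csInf hSne key_lb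
  have hU : U i = M + T * μ := rfl
  have hUc : Uc ((i : ℝ) * h) = sInf S + T * μ := rfl
  rw [hU, hUc]
  constructor
  · linarith
  · have hfin : ((⌈L / (V * h)⌉₊ : ℝ) - L / (V * h)) * h * μ = μ * ε := by
      rw [hε, ← hΔdef, hLV]; ring
    rw [hfin]; linarith
end

section
/- Let n ∈ ℕ, let a₀, a₁, …, a_n ∈ ℝ, and let M ∈ ℝ with M ≥ max_{0 ≤ j ≤ n} a_j − min_{0 ≤ j ≤ n} a_j. For a sequence R₀, R₁, …, R_n ∈ ℝ, the following are equivalent: (i) R₀ = a₀ and R_i = min(R_{i−1}, a_i) for all 1 ≤ i ≤ n; (ii) R₀ = a₀ and there exist β₁, …, β_n ∈ {0, 1} (as real numbers) such that for every 1 ≤ i ≤ n: R_{i−1} + (β_i − 1)·M ≤ R_i ≤ R_{i−1} and a_i − M·β_i ≤ R_i ≤ a_i. In particular, in either case R_i = min_{0 ≤ j ≤ i} a_j for all 0 ≤ i ≤ n. -/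
/-- Big-M linearization of the running-minimum recursion: for `M` at least the spread of
`a₀, …, a_n`, the recursion `R₀ = a₀`, `R_i = min(R_{i-1}, a_i)` is equivalent to the
mixed-integer linear constraints with binary variables `β_i ∈ {0, 1}`; in either case
`R_i = min_{0 ≤ j ≤ i} a_j`. -/
theorem bigM_running_min (n : ℕ) (a : ℕ → ℝ) (M : ℝ)
    (hM : ∀ i j : ℕ, i ≤ n → j ≤ n → a i - a j ≤ M) (R : ℕ → ℝ) :
    ((R 0 = a 0 ∧ ∀ i : ℕ, 1 ≤ i → i ≤ n → R i = min (R (i - 1)) (a i)) ↔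
      (R 0 = a 0 ∧ ∃ β : ℕ → ℝ, ∀ i : ℕ, 1 ≤ i → i ≤ n →
        (β i = 0 ∨ β i = 1) ∧
        R (i - 1) + (β i - 1) * M ≤ R i ∧ R i ≤ R (i - 1) ∧
        a i - M * β i ≤ R i ∧ R i ≤ a i)) ∧
    ((R 0 = a 0 ∧ ∀ i : ℕ, 1 ≤ i → i ≤ n → R i = min (R (i - 1)) (a i)) →
      ∀ i ≤ n, R i = (Finset.range (i + 1)).inf'
        (Finset.nonempty_range_iff.mpr (by omega)) a) := by
  have key : (R 0 = a 0 ∧ ∀ i : ℕ, 1 ≤ i → i ≤ n → R i = min (R (i - 1)) (a i)) →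
      ∀ i ≤ n, R i = (Finset.range (i + 1)).inf'
        (Finset.nonempty_range_iff.mpr (by omega)) a := by
    rintro ⟨h0, hrec⟩ i hi
    induction i with
    | zero => simpa using h0
    | succ k ih =>
      have hk : k ≤ n := by omega
      have hr := hrec (k + 1) (by omega) (by omega)
      simp only [Nat.add_sub_cancel] at hr
      have hne : (Finset.range (k + 1)).Nonempty := Finset.nonempty_range_iff.mpr (by omega)
      have e1 : (Finset.range (k + 1 + 1)).inf' (Finset.nonempty_range_iff.mpr (by omega)) a
          = a (k + 1) ⊓ (Finset.range (k + 1)).inf' hne a := by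
        rw [Finset.inf'_congr (Finset.nonempty_range_iff.mpr (by omega))
          (Finset.range_add_one) (fun _ _ => rfl), Finset.inf'_insert]
      rw [hr, ih hk, e1]
      exact min_comm _ _
  have exrep : (R 0 = a 0 ∧ ∀ i : ℕ, 1 ≤ i → i ≤ n → R i = min (R (i - 1)) (a i)) →
      ∀ i ≤ n, ∃ j ≤ n, R i = a j := by
    intro h i hi
    obtain ⟨j, hj, hja⟩ := Finset.exists_mem_eq_inf' (Finset.nonempty_range_iff.mpr
      (by omega : i + 1 ≠ 0)) a
    exact ⟨j, by simp at hj; omega, by rw [key h i hi, hja]⟩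
  constructor
  · constructor
    · intro h
      obtain ⟨h0, hrec⟩ := h
      refine ⟨h0, fun i => if a i ≤ R (i - 1) then (0 : ℝ) else 1, ?_⟩
      intro i h1 hi
      obtain ⟨j, hj, hRj⟩ := exrep ⟨h0, hrec⟩ (i - 1) (by omega)
      have hr := hrec i h1 hi
      by_cases hc : a i ≤ R (i - 1)
      · have hRi : R i = a i := by rw [hr, min_eq_right hc]
        have hb : (if a i ≤ R (i - 1) then (0 : ℝ) else 1) = 0 := if_pos hc
        simp only [hb]
        have hMb := hM j i hj hi
        rw [hRj] at *
        refine ⟨Or.inl trivial, by linarith, by linarith, by linarith, by linarith⟩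
      · push_neg at hc
        have hRi : R i = R (i - 1) := by rw [hr, min_eq_left hc.le]
        have hb : (if a i ≤ R (i - 1) then (0 : ℝ) else 1) = 1 := if_neg (by linarith)
        simp only [hb]
        have hMb := hM i j hi hj
        rw [hRj] at *
        refine ⟨Or.inr trivial, by linarith, by linarith, by linarith, by linarith⟩
    · rintro ⟨h0, β, hβ⟩
      refine ⟨h0, fun i h1 hi => ?_⟩
      obtain ⟨hb, h2, h3, h4, h5⟩ := hβ i h1 hi
      rcases hb with hb | hb
      · rw [hb] at h2 h4
        norm_num at h2 h4
        rw [min_eq_right (by linarith : a i ≤ R (i - 1))]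
        linarith
      · rw [hb] at h2 h4
        norm_num at h2 h4
        rw [min_eq_left (by linarith : R (i - 1) ≤ a i)]
        linarith
  · exact key
end
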